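/- With the frame and connection of the previous setting, the curvature tensor satisfies R(e₂,e₃)e₂ = ¼[12 - 4(c₂+c₃) - (c₂-c₃)²] e₃, R(e₂,e₃)e₃ = -¼[12 - 4(c₂+c₃) - (c₂-c₃)²] e₂, and R(e_i,e_j)e_k = 0 whenever i, j, k are pairwise distinct. -/

import Mathlib

theorem stmt9_general {V : Type*} [AddCommGroup V] [Module ℝ V]
    (bracket : V → V → V) (hskew : ∀ X Y, bracket X Y = -bracket Y X)
    (e₁ e₂ e₃ : V) (c₂ c₃ : ℝ)
    (hb23 : bracket e₂ e₃ = (2 : ℝ) • e₁)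
    (hb31 : bracket e₃ e₁ = c₂ • e₂)
    (hb12 : bracket e₁ e₂ = c₃ • e₃)
    (nabla : V →ₗ[ℝ] V →ₗ[ℝ] V)
    -- the Levi-Civita connection formulas of the previous statement
    (hn11 : nabla e₁ e₁ = 0) (hn22 : nabla e₂ e₂ = 0) (hn33 : nabla e₃ e₃ = 0)
    (hn12 : nabla e₁ e₂ = (1/2 * (c₂ + c₃ - 2)) • e₃)
    (hn21 : nabla e₂ e₁ = (1/2 * (c₂ - c₃ - 2)) • e₃)
    (hn13 : nabla e₁ e₃ = (-(1/2) * (c₂ + c₃ - 2)) • e₂)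
    (hn31 : nabla e₃ e₁ = (1/2 * (c₂ - c₃ + 2)) • e₂)
    (hn23 : nabla e₂ e₃ = (1/2 * (c₃ - c₂ + 2)) • e₁)
    (hn32 : nabla e₃ e₂ = (1/2 * (c₃ - c₂ - 2)) • e₁)
    (R : V → V → V → V)
    (hR : ∀ X Y Z, R X Y Z = nabla X (nabla Y Z) - nabla Y (nabla X Z)
      - nabla (bracket X Y) Z) :
    R e₂ e₃ e₂ = (1/4 * (12 - 4 * (c₂ + c₃) - (c₂ - c₃) ^ 2)) • e₃ ∧
    R e₂ e₃ e₃ = (-(1/4) * (12 - 4 * (c₂ + c₃) - (c₂ - c₃) ^ 2)) • e₂ ∧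
    R e₁ e₂ e₃ = 0 ∧ R e₂ e₁ e₃ = 0 ∧ R e₂ e₃ e₁ = 0 ∧
    R e₃ e₂ e₁ = 0 ∧ R e₁ e₃ e₂ = 0 ∧ R e₃ e₁ e₂ = 0 := by
  have hb32 : bracket e₃ e₂ = (-2 : ℝ) • e₁ := by rw [hskew, hb23, neg_smul]
  have hb13 : bracket e₁ e₃ = (-c₂) • e₂ := by rw [hskew, hb31, neg_smul]
  have hb21 : bracket e₂ e₁ = (-c₃) • e₃ := by rw [hskew, hb12, neg_smul]
  refine ⟨?_, ?_, ?_, ?_, ?_, ?_, ?_, ?_⟩ <;>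
    simp only [hR, hb23, hb31, hb12, hb32, hb13, hb21, map_smul, LinearMap.smul_apply,
      hn11, hn12, hn13, hn21, hn22, hn23, hn31, hn32, hn33, map_zero] <;>
    module

/-- With the frame and connection of the previous setting, the curvature tensor satisfies
`R(e₂,e₃)e₂ = ¼[12 - 4(c₂+c₃) - (c₂-c₃)²] e₃`, `R(e₂,e₃)e₃ = -¼[12 - 4(c₂+c₃) - (c₂-c₃)²] e₂`,
and `R(e_i,e_j)e_k = 0` whenever `i, j, k` are pairwise distinct. -/
theorem stmt9 {V : Type*} [AddCommGroup V] [Module ℝ V]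
    (g : V →ₗ[ℝ] V →ₗ[ℝ] ℝ) (hsym : ∀ X Y, g X Y = g Y X)
    (bracket : V → V → V) (hskew : ∀ X Y, bracket X Y = -bracket Y X)
    (e₁ e₂ e₃ : V) (c₂ c₃ : ℝ)
    (h11 : g e₁ e₁ = 1) (h22 : g e₂ e₂ = 1) (h33 : g e₃ e₃ = 1)
    (h12 : g e₁ e₂ = 0) (h13 : g e₁ e₃ = 0) (h23 : g e₂ e₃ = 0)
    (hb23 : bracket e₂ e₃ = (2 : ℝ) • e₁)
    (hb31 : bracket e₃ e₁ = c₂ • e₂)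
    (hb12 : bracket e₁ e₂ = c₃ • e₃)
    (nabla : V →ₗ[ℝ] V →ₗ[ℝ] V)
    -- the Levi-Civita connection formulas of the previous statement
    (hn11 : nabla e₁ e₁ = 0) (hn22 : nabla e₂ e₂ = 0) (hn33 : nabla e₃ e₃ = 0)
    (hn12 : nabla e₁ e₂ = (1/2 * (c₂ + c₃ - 2)) • e₃)
    (hn21 : nabla e₂ e₁ = (1/2 * (c₂ - c₃ - 2)) • e₃)
    (hn13 : nabla e₁ e₃ = (-(1/2) * (c₂ + c₃ - 2)) • e₂)
    (hn31 : nabla e₃ e₁ = (1/2 * (c₂ - c₃ + 2)) • e₂)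
    (hn23 : nabla e₂ e₃ = (1/2 * (c₃ - c₂ + 2)) • e₁)
    (hn32 : nabla e₃ e₂ = (1/2 * (c₃ - c₂ - 2)) • e₁)
    (R : V → V → V → V)
    (hR : ∀ X Y Z, R X Y Z = nabla X (nabla Y Z) - nabla Y (nabla X Z)
      - nabla (bracket X Y) Z) :
    R e₂ e₃ e₂ = (1/4 * (12 - 4 * (c₂ + c₃) - (c₂ - c₃) ^ 2)) • e₃ ∧
    R e₂ e₃ e₃ = (-(1/4) * (12 - 4 * (c₂ + c₃) - (c₂ - c₃) ^ 2)) • e₂ ∧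
    R e₁ e₂ e₃ = 0 ∧ R e₂ e₁ e₃ = 0 ∧ R e₂ e₃ e₁ = 0 ∧
    R e₃ e₂ e₁ = 0 ∧ R e₁ e₃ e₂ = 0 ∧ R e₃ e₁ e₂ = 0 :=
  stmt9_general bracket hskew e₁ e₂ e₃ c₂ c₃ hb23 hb31 hb12 nabla hn11 hn22 hn33 hn12 hn21 hn13 hn31
    hn23 hn32 R hR
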